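/- arXiv:math/0307342 — 3 statements merged into one kernel-verified Lean document; each statement's English description precedes it below -/
import Mathlib

section
/- Let 𝔤 be a finite-dimensional real Lie algebra with a direct sum decomposition 𝔤 = W_1 ⊕ ... ⊕ W_m, set V^i = W_1 ⊕ ... ⊕ W_i, and assume [V^i, V^j] ⊆ V^{i+j} for all i, j (with the convention V^k = 𝔤 for k ≥ m). For ε > 0 let δ_ε(x_1 + ... + x_m) = Σ_{i=1}^m ε^i x_i (x_i ∈ W_i). Then for all x, y ∈ 𝔤 the limit [x,y]_n := lim_{ε→0⁺} δ_ε^{-1}([δ_ε x, δ_ε y]) exists; explicitly, if x = Σ_j x_j and y = Σ_k y_k then [x,y]_n = Σ_s Σ_{j+k=s} ([x_j, y_k])_s, where (·)_s denotes the W_s-component. Moreover [·,·]_n is bilinear, antisymmetric and satisfies the Jacobi identity, each δ_ε is a Lie algebra automorphism of (𝔤, [·,·]_n), and (𝔤, [·,·]_n) is a nilpotent Lie algebra. -/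
/-!
Put `δ_ε = Σᵢ ε^(i+1) πᵢ` and `[x, y]_ε = Σ_{s,i,j} ε^(i+j+1-s) π_s [πᵢ x, π_j y]`. Comparing
components, `[δ_t x, δ_t y]_a = δ_t [x, y]_(a t)` and `[·,·]_1 = [·,·]`, so for `ε ≠ 0` the
bracket `[·,·]_ε = δ_ε⁻¹ [δ_ε ·, δ_ε ·]` is conjugate to the given one. The family is polynomial
in `ε`, hence `[·,·]_0` is the limit, and alternation and the Jacobi identity pass to it by
continuity; `a = 0` in the first identity makes every `δ_t` an automorphism. Finally `[·,·]_0`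
raises the degree by one, so brackets of length `m` vanish.
-/

open Filter Topology

/-- Left-normed iterated bracket: `iterBr B z [x₁,…,xₖ] = B x₁ (B x₂ (… (B xₖ z)))`. -/
def iterBr {V : Type*} (B : V → V → V) (z : V) : List V → V
  | [] => z
  | x :: l => B x (iterBr B z l)

section Algebra

variable {𝔤 : Type*} [AddCommGroup 𝔤] [Module ℝ 𝔤] {m : ℕ}
  (br : 𝔤 →ₗ[ℝ] 𝔤 →ₗ[ℝ] 𝔤) (π : Fin m → 𝔤 →ₗ[ℝ] 𝔤)

noncomputable def dilation (ε : ℝ) : 𝔤 →ₗ[ℝ] 𝔤 := ∑ i : Fin m, ε ^ ((i : ℕ) + 1) • π i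

/- The truncated exponent only differs from `i + j + 1 - s` when `s > i + j + 1`, where the
grading kills the term; it keeps the family polynomial in `ε`. -/
noncomputable def rescaledBracket (ε : ℝ) : 𝔤 →ₗ[ℝ] 𝔤 →ₗ[ℝ] 𝔤 :=
  ∑ s : Fin m, ∑ i : Fin m, ∑ j : Fin m,
    ε ^ ((i : ℕ) + (j : ℕ) + 1 - s) • (br.compl₁₂ (π i) (π j)).compr₂ (π s)

lemma dilation_apply (ε : ℝ) (x : 𝔤) :
    dilation π ε x = ∑ i : Fin m, ε ^ ((i : ℕ) + 1) • π i x := by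
  simp [dilation]

lemma rescaledBracket_apply (ε : ℝ) (x y : 𝔤) :
    rescaledBracket br π ε x y = ∑ s : Fin m, ∑ i : Fin m, ∑ j : Fin m,
      ε ^ ((i : ℕ) + (j : ℕ) + 1 - s) • π s (br (π i x) (π j y)) := by
  simp [rescaledBracket]

variable {br π}

lemma proj_dilation (hproj : ∀ i j x, π i (π j x) = if i = j then π i x else 0)
    (t : ℝ) (i : Fin m) (x : 𝔤) : π i (dilation π t x) = t ^ ((i : ℕ) + 1) • π i x := by
  simp [dilation_apply, hproj]

lemma proj_rescaledBracket (hproj : ∀ i j x, π i (π j x) = if i = j then π i x else 0)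
    (ε : ℝ) (s : Fin m) (x y : 𝔤) : π s (rescaledBracket br π ε x y) =
      ∑ i : Fin m, ∑ j : Fin m, ε ^ ((i : ℕ) + (j : ℕ) + 1 - s) • π s (br (π i x) (π j y)) := by
  simp [rescaledBracket_apply, hproj]

lemma dilation_dilation (hproj : ∀ i j x, π i (π j x) = if i = j then π i x else 0)
    (s t : ℝ) (x : 𝔤) : dilation π s (dilation π t x) = dilation π (s * t) x := by
  simp only [dilation_apply π s, dilation_apply π (s * t), proj_dilation hproj, smul_smul, mul_pow]

lemma dilation_one (hsum : ∀ x, ∑ i, π i x = x) (x : 𝔤) : dilation π 1 x = x := by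
  simp [dilation_apply, hsum]

lemma rescaledBracket_one (hsum : ∀ x, ∑ i, π i x = x) (x y : 𝔤) :
    rescaledBracket br π 1 x y = br x y := by
  simp only [rescaledBracket_apply, one_pow, one_smul, ← map_sum, ← LinearMap.sum_apply, hsum]

lemma rescaledBracket_dilation (hproj : ∀ i j x, π i (π j x) = if i = j then π i x else 0)
    (hgrade : ∀ (i j s : Fin m) (x y : 𝔤),
      (i : ℕ) + (j : ℕ) + 1 < (s : ℕ) → π s (br (π i x) (π j y)) = 0)
    (a t : ℝ) (x y : 𝔤) :
    rescaledBracket br π a (dilation π t x) (dilation π t y) =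
      dilation π t (rescaledBracket br π (a * t) x y) := by
  rw [dilation_apply π t (rescaledBracket br π (a * t) x y), rescaledBracket_apply]
  simp only [proj_rescaledBracket hproj, proj_dilation hproj, map_smul, LinearMap.smul_apply,
    Finset.smul_sum, smul_smul]
  refine Finset.sum_congr rfl fun s _ => Finset.sum_congr rfl fun i _ =>
    Finset.sum_congr rfl fun j _ => ?_
  rcases le_or_gt (s : ℕ) ((i : ℕ) + (j : ℕ) + 1) with hle | hlt
  · have hexp : (j : ℕ) + 1 + ((i : ℕ) + 1) = (i + j + 1 - s) + ((s : ℕ) + 1) := by omega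
    rw [← pow_add, hexp, pow_add, mul_pow]
    congr 1
    ring
  · simp [hgrade i j s x y hlt]

lemma rescaledBracket_eq (hsum : ∀ x, ∑ i, π i x = x)
    (hproj : ∀ i j x, π i (π j x) = if i = j then π i x else 0)
    (hgrade : ∀ (i j s : Fin m) (x y : 𝔤),
      (i : ℕ) + (j : ℕ) + 1 < (s : ℕ) → π s (br (π i x) (π j y)) = 0)
    {ε : ℝ} (hε : ε ≠ 0) (x y : 𝔤) :
    rescaledBracket br π ε x y = dilation π ε⁻¹ (br (dilation π ε x) (dilation π ε y)) := by
  rw [← rescaledBracket_one (br := br) hsum, rescaledBracket_dilation hproj hgrade, one_mul,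
    dilation_dilation hproj, inv_mul_cancel₀ hε, dilation_one hsum]

lemma rescaledBracket_self (hbr_alt : ∀ x, br x x = 0) (hsum : ∀ x, ∑ i, π i x = x)
    (hproj : ∀ i j x, π i (π j x) = if i = j then π i x else 0)
    (hgrade : ∀ (i j s : Fin m) (x y : 𝔤),
      (i : ℕ) + (j : ℕ) + 1 < (s : ℕ) → π s (br (π i x) (π j y)) = 0)
    {ε : ℝ} (hε : ε ≠ 0) (x : 𝔤) : rescaledBracket br π ε x x = 0 := by
  rw [rescaledBracket_eq hsum hproj hgrade hε, hbr_alt, map_zero]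

lemma rescaledBracket_jacobi
    (hbr_jac : ∀ x y z, br x (br y z) = br (br x y) z + br y (br x z))
    (hsum : ∀ x, ∑ i, π i x = x)
    (hproj : ∀ i j x, π i (π j x) = if i = j then π i x else 0)
    (hgrade : ∀ (i j s : Fin m) (x y : 𝔤),
      (i : ℕ) + (j : ℕ) + 1 < (s : ℕ) → π s (br (π i x) (π j y)) = 0)
    {ε : ℝ} (hε : ε ≠ 0) (x y z : 𝔤) :
    rescaledBracket br π ε x (rescaledBracket br π ε y z) =
      rescaledBracket br π ε (rescaledBracket br π ε x y) z +
        rescaledBracket br π ε y (rescaledBracket br π ε x z) := by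
  have hcancel : ∀ v, dilation π ε (dilation π ε⁻¹ v) = v := fun v => by
    rw [dilation_dilation hproj, mul_inv_cancel₀ hε, dilation_one hsum]
  simp only [rescaledBracket_eq hsum hproj hgrade hε, hcancel]
  rw [hbr_jac, map_add]

lemma rescaledBracket_zero_apply
    (hgrade : ∀ (i j s : Fin m) (x y : 𝔤),
      (i : ℕ) + (j : ℕ) + 1 < (s : ℕ) → π s (br (π i x) (π j y)) = 0) (x y : 𝔤) :
    rescaledBracket br π 0 x y = ∑ i : Fin m, ∑ j : Fin m,
      if h : (i : ℕ) + (j : ℕ) + 1 < m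
      then π ⟨(i : ℕ) + (j : ℕ) + 1, h⟩ (br (π i x) (π j y)) else 0 := by
  rw [rescaledBracket_apply, Finset.sum_comm]
  refine Finset.sum_congr rfl fun i _ => ?_
  rw [Finset.sum_comm]
  refine Finset.sum_congr rfl fun j _ => ?_
  have hterm : ∀ s : Fin m, (0 : ℝ) ^ ((i : ℕ) + (j : ℕ) + 1 - s) • π s (br (π i x) (π j y)) =
      if (s : ℕ) = i + j + 1 then π s (br (π i x) (π j y)) else 0 := fun s => by
    rcases lt_trichotomy (s : ℕ) (i + j + 1) with hlt | heq | hgt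
    · rw [zero_pow (by omega), zero_smul, if_neg hlt.ne]
    · simp [heq]
    · rw [hgrade i j s x y hgt, smul_zero, ite_self]
  simp only [hterm]
  split_ifs with h
  · rw [Finset.sum_eq_single ⟨_, h⟩ (fun s _ hs => if_neg fun h' => hs (Fin.ext h'))
      (fun h' => absurd (Finset.mem_univ _) h'), if_pos rfl]
  · exact Finset.sum_eq_zero fun s _ => if_neg (by omega)

lemma dilation_rescaledBracket_zero
    (hproj : ∀ i j x, π i (π j x) = if i = j then π i x else 0)
    (hgrade : ∀ (i j s : Fin m) (x y : 𝔤),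
      (i : ℕ) + (j : ℕ) + 1 < (s : ℕ) → π s (br (π i x) (π j y)) = 0) (t : ℝ) (x y : 𝔤) :
    dilation π t (rescaledBracket br π 0 x y) =
      rescaledBracket br π 0 (dilation π t x) (dilation π t y) := by
  rw [rescaledBracket_dilation hproj hgrade, zero_mul]

lemma proj_rescaledBracket_zero_eq_zero
    (hproj : ∀ i j x, π i (π j x) = if i = j then π i x else 0) {k : ℕ} {w : 𝔤}
    (hw : ∀ t : Fin m, (t : ℕ) < k → π t w = 0) (x : 𝔤) (s : Fin m) (hs : (s : ℕ) ≤ k) :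
    π s (rescaledBracket br π 0 x w) = 0 := by
  rw [proj_rescaledBracket hproj]
  refine Finset.sum_eq_zero fun i _ => Finset.sum_eq_zero fun j _ => ?_
  by_cases hj : (j : ℕ) < k
  · rw [hw j hj, map_zero, map_zero, smul_zero]
  · rw [zero_pow (by omega), zero_smul]

lemma proj_iterBr_rescaledBracket_zero
    (hproj : ∀ i j x, π i (π j x) = if i = j then π i x else 0) (z : 𝔤) (l : List 𝔤)
    (s : Fin m) (hs : (s : ℕ) < l.length) :
    π s (iterBr (fun a b => rescaledBracket br π 0 a b) z l) = 0 := by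
  induction l generalizing s with
  | nil => exact absurd hs (Nat.not_lt_zero _)
  | cons x l ih =>
    exact proj_rescaledBracket_zero_eq_zero hproj (fun t ht => ih t ht) x s
      (Nat.lt_succ_iff.mp hs)

lemma iterBr_rescaledBracket_zero (hsum : ∀ x, ∑ i, π i x = x)
    (hproj : ∀ i j x, π i (π j x) = if i = j then π i x else 0) (l : List 𝔤)
    (hl : m ≤ l.length) (z : 𝔤) : iterBr (fun a b => rescaledBracket br π 0 a b) z l = 0 := by
  rw [← hsum (iterBr _ z l)]
  exact Finset.sum_eq_zero fun s _ =>
    proj_iterBr_rescaledBracket_zero hproj z l s (lt_of_lt_of_le s.isLt hl)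

end Algebra

lemma apply_zero_eq_of_eqOn_compl_zero {E : Type*} [TopologicalSpace E] [T2Space E]
    {f g : ℝ → E} (hf : Continuous f) (hg : Continuous g) (h : Set.EqOn f g {0}ᶜ) :
    f 0 = g 0 :=
  congrFun (hf.ext_on (dense_compl_singleton 0) hg h) 0

section Limit

variable {𝔤 : Type*} [AddCommGroup 𝔤] [Module ℝ 𝔤] [TopologicalSpace 𝔤]
  [IsTopologicalAddGroup 𝔤] [ContinuousSMul ℝ 𝔤] {m : ℕ}
  {br : 𝔤 →ₗ[ℝ] 𝔤 →ₗ[ℝ] 𝔤} {π : Fin m → 𝔤 →ₗ[ℝ] 𝔤}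

lemma tendsto_rescaledBracket (hsum : ∀ x, ∑ i, π i x = x)
    (hproj : ∀ i j x, π i (π j x) = if i = j then π i x else 0)
    (hgrade : ∀ (i j s : Fin m) (x y : 𝔤),
      (i : ℕ) + (j : ℕ) + 1 < (s : ℕ) → π s (br (π i x) (π j y)) = 0) (x y : 𝔤) :
    Tendsto (fun ε => dilation π ε⁻¹ (br (dilation π ε x) (dilation π ε y))) (𝓝[>] 0)
      (𝓝 (rescaledBracket br π 0 x y)) := by
  have hcont : Continuous fun ε => rescaledBracket br π ε x y := by
    simp only [rescaledBracket_apply]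
    fun_prop
  refine ((hcont.tendsto 0).mono_left nhdsWithin_le_nhds).congr' ?_
  filter_upwards [self_mem_nhdsWithin] with ε hε
  exact rescaledBracket_eq hsum hproj hgrade (ne_of_gt hε) x y

variable [T2Space 𝔤]

lemma rescaledBracket_zero_self (hbr_alt : ∀ x, br x x = 0) (hsum : ∀ x, ∑ i, π i x = x)
    (hproj : ∀ i j x, π i (π j x) = if i = j then π i x else 0)
    (hgrade : ∀ (i j s : Fin m) (x y : 𝔤),
      (i : ℕ) + (j : ℕ) + 1 < (s : ℕ) → π s (br (π i x) (π j y)) = 0) (x : 𝔤) :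
    rescaledBracket br π 0 x x = 0 :=
  apply_zero_eq_of_eqOn_compl_zero (f := fun ε => rescaledBracket br π ε x x)
    (by simp only [rescaledBracket_apply]; fun_prop) continuous_const
    fun _ hε => rescaledBracket_self hbr_alt hsum hproj hgrade hε x

lemma rescaledBracket_zero_jacobi
    (hbr_jac : ∀ x y z, br x (br y z) = br (br x y) z + br y (br x z))
    (hsum : ∀ x, ∑ i, π i x = x)
    (hproj : ∀ i j x, π i (π j x) = if i = j then π i x else 0)
    (hgrade : ∀ (i j s : Fin m) (x y : 𝔤),
      (i : ℕ) + (j : ℕ) + 1 < (s : ℕ) → π s (br (π i x) (π j y)) = 0) (x y z : 𝔤) :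
    rescaledBracket br π 0 x (rescaledBracket br π 0 y z) =
      rescaledBracket br π 0 (rescaledBracket br π 0 x y) z +
        rescaledBracket br π 0 y (rescaledBracket br π 0 x z) := by
  refine apply_zero_eq_of_eqOn_compl_zero
    (f := fun ε => rescaledBracket br π ε x (rescaledBracket br π ε y z))
    (g := fun ε => rescaledBracket br π ε (rescaledBracket br π ε x y) z +
      rescaledBracket br π ε y (rescaledBracket br π ε x z)) ?_ ?_
    fun _ hε => rescaledBracket_jacobi hbr_jac hsum hproj hgrade hε x y z <;>
  · simp only [rescaledBracket_apply, map_sum, map_smul, LinearMap.sum_apply,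
      LinearMap.smul_apply]
    fun_prop

end Limit

theorem stmt_5_general {𝔤 : Type*} [NormedAddCommGroup 𝔤] [NormedSpace ℝ 𝔤]
    (br : 𝔤 →ₗ[ℝ] 𝔤 →ₗ[ℝ] 𝔤)
    (hbr_alt : ∀ x : 𝔤, br x x = 0)
    (hbr_jac : ∀ x y z : 𝔤, br x (br y z) = br (br x y) z + br y (br x z))
    (m : ℕ) (π : Fin m → (𝔤 →ₗ[ℝ] 𝔤))
    (hsum : ∀ x : 𝔤, ∑ i, π i x = x)
    (hproj : ∀ (i j : Fin m) (x : 𝔤), π i (π j x) = if i = j then π i x else 0)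
    (hgrade : ∀ (i j s : Fin m) (x y : 𝔤),
      (i : ℕ) + (j : ℕ) + 1 < (s : ℕ) → π s (br (π i x) (π j y)) = 0)
    (δ : ℝ → 𝔤 → 𝔤)
    (hδ : ∀ (ε : ℝ) (x : 𝔤), δ ε x = ∑ i : Fin m, ε ^ ((i : ℕ) + 1) • π i x) :
    ∃ brn : 𝔤 →ₗ[ℝ] 𝔤 →ₗ[ℝ] 𝔤,
      (∀ x y : 𝔤, Filter.Tendsto (fun ε : ℝ => δ ε⁻¹ (br (δ ε x) (δ ε y)))
        (𝓝[>] (0 : ℝ)) (𝓝 (brn x y))) ∧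
      (∀ x y : 𝔤, brn x y = ∑ i : Fin m, ∑ j : Fin m,
        if h : (i : ℕ) + (j : ℕ) + 1 < m
        then π ⟨(i : ℕ) + (j : ℕ) + 1, h⟩ (br (π i x) (π j y)) else 0) ∧
      (∀ x : 𝔤, brn x x = 0) ∧
      (∀ x y z : 𝔤, brn x (brn y z) = brn (brn x y) z + brn y (brn x z)) ∧
      (∀ ε : ℝ, 0 < ε → ∀ x y : 𝔤, δ ε (brn x y) = brn (δ ε x) (δ ε y)) ∧
      (∀ l : List 𝔤, m ≤ l.length → ∀ z : 𝔤, iterBr (fun a b => brn a b) z l = 0) := by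
  obtain rfl : δ = fun ε => ⇑(dilation π ε) :=
    funext fun ε => funext fun x => (hδ ε x).trans (dilation_apply π ε x).symm
  exact ⟨rescaledBracket br π 0,
    tendsto_rescaledBracket hsum hproj hgrade,
    rescaledBracket_zero_apply hgrade,
    rescaledBracket_zero_self hbr_alt hsum hproj hgrade,
    rescaledBracket_zero_jacobi hbr_jac hsum hproj hgrade,
    fun t _ => dilation_rescaledBracket_zero hproj hgrade t,
    fun l hl => iterBr_rescaledBracket_zero hsum hproj l hl⟩

/-- For a finite-dimensional real Lie algebra `(𝔤, br)` graded by projections `π i` onto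
`W_{i+1}` with `[V^i, V^j] ⊆ V^{i+j}`, and dilatations `δ_ε x = Σ_i ε^i (π i x)`:
the limit `[x,y]ₙ = lim_{ε→0⁺} δ_ε⁻¹ [δ_ε x, δ_ε y]` exists, is given by the explicit
graded formula, is a Lie bracket (bilinear, alternating, Jacobi), each `δ_ε` is an
automorphism of it, and the resulting Lie algebra is nilpotent. -/
theorem stmt_5 {𝔤 : Type*} [NormedAddCommGroup 𝔤] [NormedSpace ℝ 𝔤] [FiniteDimensional ℝ 𝔤]
    (br : 𝔤 →ₗ[ℝ] 𝔤 →ₗ[ℝ] 𝔤)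
    (hbr_alt : ∀ x : 𝔤, br x x = 0)
    (hbr_jac : ∀ x y z : 𝔤, br x (br y z) = br (br x y) z + br y (br x z))
    (m : ℕ) (hm : 1 ≤ m) (π : Fin m → (𝔤 →ₗ[ℝ] 𝔤))
    (hsum : ∀ x : 𝔤, ∑ i, π i x = x)
    (hproj : ∀ (i j : Fin m) (x : 𝔤), π i (π j x) = if i = j then π i x else 0)
    (hgrade : ∀ (i j s : Fin m) (x y : 𝔤),
      (i : ℕ) + (j : ℕ) + 1 < (s : ℕ) → π s (br (π i x) (π j y)) = 0)
    (δ : ℝ → 𝔤 → 𝔤)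
    (hδ : ∀ (ε : ℝ) (x : 𝔤), δ ε x = ∑ i : Fin m, ε ^ ((i : ℕ) + 1) • π i x) :
    ∃ brn : 𝔤 →ₗ[ℝ] 𝔤 →ₗ[ℝ] 𝔤,
      (∀ x y : 𝔤, Filter.Tendsto (fun ε : ℝ => δ ε⁻¹ (br (δ ε x) (δ ε y)))
        (𝓝[>] (0 : ℝ)) (𝓝 (brn x y))) ∧
      (∀ x y : 𝔤, brn x y = ∑ i : Fin m, ∑ j : Fin m,
        if h : (i : ℕ) + (j : ℕ) + 1 < m
        then π ⟨(i : ℕ) + (j : ℕ) + 1, h⟩ (br (π i x) (π j y)) else 0) ∧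
      (∀ x : 𝔤, brn x x = 0) ∧
      (∀ x y z : 𝔤, brn x (brn y z) = brn (brn x y) z + brn y (brn x z)) ∧
      (∀ ε : ℝ, 0 < ε → ∀ x y : 𝔤, δ ε (brn x y) = brn (δ ε x) (δ ε y)) ∧
      (∀ l : List 𝔤, m ≤ l.length → ∀ z : 𝔤, iterBr (fun a b => brn a b) z l = 0) :=
  stmt_5_general br hbr_alt hbr_jac m π hsum hproj hgrade δ hδ
end

section
/- Let G be a topological group with dilatations δ_ε (ε > 0) satisfying hypotheses (H0), (H1), (H2), with limit operation β. Define on G × G the operation (x,u)·(y,v) = (xy, y^{-1}uyv) and the dilatations δ_ε^{(2)}(x,u) = (δ_ε x, δ_ε u). Then: (a) G × G with this operation is a group, with identity (e,e), and the map op : G × G → G, op(x,u) = xu, is a group homomorphism; (b) for all (x,u), (y,v) ∈ G × G, lim_{ε→0⁺} δ_ε^{-1}( op(x,u)^{-1} · op( (x,u)·δ_ε^{(2)}(y,v) ) ) = β(y,v); that is, the group operation of G is derivable at every point and its derivative at (x,u) applied to (y,v) equals β(y,v). -/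
open Filter Topology

/-- The operation `(x,u)(y,v) = (xy, y⁻¹uyv)` of the double `G⁽²⁾ = G × G`. -/
def mul2 {G : Type*} [Group G] (p q : G × G) : G × G :=
  (p.1 * q.1, q.1⁻¹ * p.2 * q.1 * q.2)

/-- The operation map `op(x,u) = xu` of a group, seen on the double `G⁽²⁾`. -/
def op2 {G : Type*} [Group G] (p : G × G) : G :=
  p.1 * p.2

section Double

variable {G : Type*} [Group G]

theorem mul2_assoc (p q r : G × G) : mul2 (mul2 p q) r = mul2 p (mul2 q r) := by
  simp only [mul2, Prod.mk.injEq]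
  constructor <;> group

theorem mul2_one (p : G × G) : mul2 p (1, 1) = p := by
  simp [mul2]

theorem one_mul2 (p : G × G) : mul2 (1, 1) p = p := by
  simp [mul2]

def inv2 (p : G × G) : G × G :=
  (p.1⁻¹, p.1 * p.2⁻¹ * p.1⁻¹)

theorem mul2_inv2 (p : G × G) : mul2 p (inv2 p) = (1, 1) := by
  simp only [mul2, inv2, Prod.mk.injEq]
  constructor <;> group

theorem inv2_mul2 (p : G × G) : mul2 (inv2 p) p = (1, 1) := by
  simp only [mul2, inv2, Prod.mk.injEq]
  constructor <;> group

theorem op2_mul2 (p q : G × G) : op2 (mul2 p q) = op2 p * op2 q := by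
  simp only [mul2, op2]
  group

theorem op2_inv_mul_op2_mul2 (p q : G × G) : (op2 p)⁻¹ * op2 (mul2 p q) = op2 q := by
  rw [op2_mul2, inv_mul_cancel_left]

end Double

theorem stmt_8_general {G : Type*} [Group G] [UniformSpace G]
    (δ : ℝ → G → G)
    (β : G → G → G)
    (H1 : ∀ K : Set (G × G), IsCompact K →
      TendstoUniformlyOn (fun (ε : ℝ) (p : G × G) => δ ε⁻¹ (δ ε p.1 * δ ε p.2))
        (fun p => β p.1 p.2) (𝓝[>] (0 : ℝ)) K) :
    (∀ p q r : G × G, mul2 (mul2 p q) r = mul2 p (mul2 q r)) ∧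
    (∀ p : G × G, mul2 p (1, 1) = p ∧ mul2 (1, 1) p = p) ∧
    (∀ p : G × G, ∃ q : G × G, mul2 p q = (1, 1) ∧ mul2 q p = (1, 1)) ∧
    (∀ p q : G × G, op2 (mul2 p q) = op2 p * op2 q) ∧
    (∀ x u y v : G,
      Filter.Tendsto
        (fun ε : ℝ => δ ε⁻¹ ((op2 (x, u))⁻¹ * op2 (mul2 (x, u) (δ ε y, δ ε v))))
        (𝓝[>] (0 : ℝ)) (𝓝 (β y v))) := by
  refine ⟨mul2_assoc, fun p => ⟨mul2_one p, one_mul2 p⟩,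
    fun p => ⟨inv2 p, mul2_inv2 p, inv2_mul2 p⟩, op2_mul2, fun x u y v => ?_⟩
  -- the difference quotient is exactly `δ ε⁻¹ (δ ε y * δ ε v)`, so this is H1 at `(y, v)`
  simp only [op2_inv_mul_op2_mul2]
  exact (H1 {(y, v)} isCompact_singleton).tendsto_at rfl

/-- For a uniform group `G` with dilatations satisfying H0, H1, H2 (limit operation `β`):
the double `G⁽²⁾ = G × G` with `(x,u)(y,v) = (xy, y⁻¹uyv)` is a group, `op(x,u) = xu` is a
group homomorphism, and `op` is derivable with derivative
`D op(x,u)(y,v) = β(y,v)`. -/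
theorem stmt_8 {G : Type*} [Group G] [UniformSpace G] [IsUniformGroup G]
    (δ : ℝ → G → G)
    (hδcont : ∀ ε : ℝ, 0 < ε → Continuous (δ ε))
    (hδbij : ∀ ε : ℝ, 0 < ε → Function.Bijective (δ ε))
    (hδone : δ 1 = id)
    (hδcomp : ∀ ε μ : ℝ, 0 < ε → 0 < μ → ∀ x, δ ε (δ μ x) = δ (ε * μ) x)
    (β : G → G → G)
    (H0 : ∀ K : Set G, IsCompact K →
      TendstoUniformlyOn (fun (ε : ℝ) (x : G) => δ ε x) (fun _ => (1 : G))
        (𝓝[>] (0 : ℝ)) K)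
    (H1 : ∀ K : Set (G × G), IsCompact K →
      TendstoUniformlyOn (fun (ε : ℝ) (p : G × G) => δ ε⁻¹ (δ ε p.1 * δ ε p.2))
        (fun p => β p.1 p.2) (𝓝[>] (0 : ℝ)) K)
    (H2 : ∀ K : Set G, IsCompact K →
      TendstoUniformlyOn (fun (ε : ℝ) (x : G) => δ ε⁻¹ ((δ ε x)⁻¹)) (fun x => x⁻¹)
        (𝓝[>] (0 : ℝ)) K) :
    (∀ p q r : G × G, mul2 (mul2 p q) r = mul2 p (mul2 q r)) ∧
    (∀ p : G × G, mul2 p (1, 1) = p ∧ mul2 (1, 1) p = p) ∧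
    (∀ p : G × G, ∃ q : G × G, mul2 p q = (1, 1) ∧ mul2 q p = (1, 1)) ∧
    (∀ p q : G × G, op2 (mul2 p q) = op2 p * op2 q) ∧
    (∀ x u y v : G,
      Filter.Tendsto
        (fun ε : ℝ => δ ε⁻¹ ((op2 (x, u))⁻¹ * op2 (mul2 (x, u) (δ ε y, δ ε v))))
        (𝓝[>] (0 : ℝ)) (𝓝 (β y v))) :=
  stmt_8_general δ β H1
end

section
/- Let ω be the standard symplectic form on ℝ^{2n}. Let f : ℝ → ℝ^{2n} be differentiable, f̄ : ℝ → ℝ, and a' : ℝ → ℝ, and assume that for every compact interval K ⊆ ℝ, the quantity f̄(t+s) − f̄(t) − ½ω(f(t), f(t+s)) − s·a'(t) is o(s²) as s → 0, uniformly for t ∈ K. Then f̄ is differentiable, with f̄'(t) = a'(t) + ½ω(f(t), f'(t)) for every t, and the function a' is constant on ℝ. -/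
open Filter Topology

/-- `ℝ^{2n}`, as a Euclidean space. -/
abbrev Esp (n : ℕ) := EuclideanSpace ℝ (Fin (2 * n))

/-- The standard complex structure `J` on `ℝ^{2n}`. -/
noncomputable def stdJ (n : ℕ) (x : Esp n) : Esp n :=
  WithLp.toLp 2 fun i => if h : (i : ℕ) < n then -x ⟨(i : ℕ) + n, by omega⟩
    else x ⟨(i : ℕ) - n, by have := i.isLt; omega⟩

/-- The standard symplectic form `ω(x,y) = ⟨Jx, y⟩` on `ℝ^{2n}`. -/
noncomputable def stdOmega (n : ℕ) (x y : Esp n) : ℝ :=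
  inner ℝ (stdJ n x) y

/-- Multiplication in the Heisenberg group `H(n) = ℝ^{2n} × ℝ`. -/
noncomputable def Hmul (n : ℕ) (p q : Esp n × ℝ) : Esp n × ℝ :=
  (p.1 + q.1, p.2 + q.2 + (1 / 2) * stdOmega n p.1 q.1)

/-- Inverse in the Heisenberg group. -/
noncomputable def Hinv (n : ℕ) (p : Esp n × ℝ) : Esp n × ℝ :=
  (-p.1, -p.2)

/-- The dilatations `δ_ε(x, x̄) = (εx, ε²x̄)` of the Heisenberg group. -/
noncomputable def Hdil (n : ℕ) (ε : ℝ) (p : Esp n × ℝ) : Esp n × ℝ :=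
  (ε • p.1, ε ^ 2 * p.2)

/-! The quantity `F t u = f̄ u − f̄ t − ½ ω(f t, f u)` is the vertical component of
`(f t, f̄ t)⁻¹ · (f u, f̄ u)` in `H(n)`, and the hypothesis says `F t u = (u − t) a'(t) + o((u − t)²)`
locally uniformly. Removing the smooth term `½ ω(f t, f u)` leaves a function of `u` with derivative
`a'(t)` at `t`. Since ω is antisymmetric, `F u t = −F t u`; adding the expansions based at `t` and
at `u` gives `(u − t)(a'(u) − a'(t)) = o((u − t)²)`, so `a'` has derivative zero everywhere. -/

section SymplecticForm

variable {n : ℕ}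

-- `finProdFinEquiv (0, k) = k` and `finProdFinEquiv (1, k) = k + n`.
lemma stdJ_finProdFinEquiv_zero (x : Esp n) (k : Fin n) :
    stdJ n x (finProdFinEquiv (0, k)) = -x (finProdFinEquiv (1, k)) := by
  simp [stdJ, finProdFinEquiv, add_comm]

lemma stdJ_finProdFinEquiv_one (x : Esp n) (k : Fin n) :
    stdJ n x (finProdFinEquiv (1, k)) = x (finProdFinEquiv (0, k)) := by
  simp [stdJ, finProdFinEquiv]

lemma stdOmega_eq_sum (x y : Esp n) :
    stdOmega n x y = ∑ k : Fin n,
      (x (finProdFinEquiv (0, k)) * y (finProdFinEquiv (1, k)) -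
        x (finProdFinEquiv (1, k)) * y (finProdFinEquiv (0, k))) := by
  rw [stdOmega, PiLp.inner_apply, ← finProdFinEquiv.sum_comp, Fintype.sum_prod_type_right]
  refine Finset.sum_congr rfl fun k _ => ?_
  simp only [RCLike.inner_apply, Real.ringHom_apply, Fin.sum_univ_two, stdJ_finProdFinEquiv_zero,
    mul_neg, stdJ_finProdFinEquiv_one]
  ring

lemma stdOmega_anticomm (x y : Esp n) : stdOmega n y x = -stdOmega n x y := by
  simp only [stdOmega_eq_sum, ← Finset.sum_neg_distrib]
  exact Finset.sum_congr rfl fun k _ => by ring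

lemma stdOmega_self (x : Esp n) : stdOmega n x x = 0 := by
  linarith [stdOmega_anticomm x x]

lemma HasDerivAt.stdOmega_right {f : ℝ → Esp n} {f' : Esp n} {t : ℝ} (hf : HasDerivAt f f' t)
    (x : Esp n) : HasDerivAt (fun u => stdOmega n x (f u)) (stdOmega n x f') t :=
  (innerSL ℝ (stdJ n x)).hasFDerivAt.comp_hasDerivAt t hf

end SymplecticForm

def IsLittleOSqLocallyUniformly (R : ℝ → ℝ → ℝ) : Prop :=
  ∀ K : Set ℝ, IsCompact K → ∀ c : ℝ, 0 < c → ∃ η > 0, ∀ s : ℝ, |s| ≤ η →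
    ∀ t ∈ K, |R t s| ≤ c * s ^ 2

lemma IsLittleOSqLocallyUniformly.eventually_abs_le {R : ℝ → ℝ → ℝ}
    (hR : IsLittleOSqLocallyUniformly R) (t : ℝ) {c : ℝ} (hc : 0 < c) :
    ∀ᶠ u in 𝓝 t, |R t (u - t)| ≤ c * (u - t) ^ 2 ∧ |R u (t - u)| ≤ c * (u - t) ^ 2 := by
  obtain ⟨η, hη, hR⟩ := hR (Metric.closedBall t 1) (isCompact_closedBall t 1) c hc
  filter_upwards [Metric.closedBall_mem_nhds t (lt_min hη one_pos)] with u hu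
  rw [Metric.mem_closedBall, Real.dist_eq, le_min_iff] at hu
  refine ⟨hR _ hu.1 t (Metric.mem_closedBall_self zero_le_one), ?_⟩
  rw [← neg_sub t u, neg_sq]
  exact hR _ (by rw [abs_sub_comm]; exact hu.1) u hu.2

lemma hasDerivAt_of_isBigO_sq {E : Type*} [NormedAddCommGroup E] [NormedSpace ℝ E]
    {g : ℝ → E} {d : E} {t : ℝ}
    (h : (fun u => g u - g t - (u - t) • d) =O[𝓝 t] fun u => (u - t) ^ 2) :
    HasDerivAt g d t := by
  rw [hasDerivAt_iff_isLittleO]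
  exact h.trans_isLittleO (by simpa using Asymptotics.isLittleO_pow_sub_sub t one_lt_two)

lemma hasDerivAt_zero_of_anticomm {F : ℝ → ℝ → ℝ} {a : ℝ → ℝ} (hF : ∀ t u, F u t = -F t u)
    (h : IsLittleOSqLocallyUniformly fun t s => F t (t + s) - s * a t) (t : ℝ) :
    HasDerivAt a 0 t := by
  rw [hasDerivAt_iff_isLittleO, Asymptotics.isLittleO_iff]
  intro c hc
  filter_upwards [h.eventually_abs_le t (half_pos hc)] with u ⟨htu, hut⟩
  rw [add_sub_cancel] at htu hut
  rw [smul_zero, sub_zero, Real.norm_eq_abs, Real.norm_eq_abs]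
  rcases eq_or_ne u t with rfl | hne
  · simp
  refine le_of_mul_le_mul_left ?_ (abs_pos.2 (sub_ne_zero.2 hne))
  calc |u - t| * |a u - a t|
      = |(F t u - (u - t) * a t) + (F u t - (t - u) * a u)| := by
        rw [← abs_mul, hF]; congr 1; ring
    _ ≤ c / 2 * (u - t) ^ 2 + c / 2 * (u - t) ^ 2 := (abs_add_le _ _).trans (add_le_add htu hut)
    _ = |u - t| * (c * |u - t|) := by rw [← sq_abs (u - t)]; ring

lemma hasDerivAt_vertical_of_isLittleOSqLocallyUniformly {n : ℕ} {f : ℝ → Esp n} {f' : Esp n}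
    {fbar a' : ℝ → ℝ} {t : ℝ} (hf : HasDerivAt f f' t)
    (ho : IsLittleOSqLocallyUniformly fun t s =>
      fbar (t + s) - fbar t - (1 / 2) * stdOmega n (f t) (f (t + s)) - s * a' t) :
    HasDerivAt fbar (a' t + (1 / 2) * stdOmega n (f t) f') t := by
  have hg : HasDerivAt (fun u => fbar u - (1 / 2) * stdOmega n (f t) (f u)) (a' t) t := by
    refine hasDerivAt_of_isBigO_sq (Asymptotics.IsBigO.of_bound 1 ?_)
    filter_upwards [ho.eventually_abs_le t one_pos] with u hu
    rw [add_sub_cancel] at hu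
    rw [Real.norm_eq_abs, Real.norm_eq_abs, abs_of_nonneg (sq_nonneg (u - t)), stdOmega_self,
      smul_eq_mul]
    convert hu.1 using 2
    ring
  exact (hg.add ((hf.stdOmega_right (f t)).const_mul (1 / 2))).congr_of_eventuallyEq
    (.of_forall fun u => (sub_add_cancel _ _).symm)

/-- For a curve `t ↦ (f(t), f̄(t))` in the Heisenberg group: if `f` is differentiable with
derivative `f'` and for every compact `K` the quantity
`f̄(t+s) − f̄(t) − ½ω(f(t), f(t+s)) − s·a'(t)` is `o(s²)` as `s → 0`, uniformly in `t ∈ K`,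
then `f̄` is differentiable with `f̄'(t) = a'(t) + ½ω(f(t), f'(t))`, and `a'` is constant. -/
theorem stmt_10 (n : ℕ) (f f' : ℝ → Esp n) (fbar a' : ℝ → ℝ)
    (hf : ∀ t, HasDerivAt f (f' t) t)
    (ho : ∀ K : Set ℝ, IsCompact K → ∀ c : ℝ, 0 < c → ∃ η > 0, ∀ s : ℝ, |s| ≤ η →
      ∀ t ∈ K,
        |fbar (t + s) - fbar t - (1 / 2) * stdOmega n (f t) (f (t + s)) - s * a' t| ≤
          c * s ^ 2) :
    (∀ t, HasDerivAt fbar (a' t + (1 / 2) * stdOmega n (f t) (f' t)) t) ∧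
    (∀ t s, a' t = a' s) := by
  refine ⟨fun t => hasDerivAt_vertical_of_isLittleOSqLocallyUniformly (hf t) ho, fun t s => ?_⟩
  have ha : ∀ t, HasDerivAt a' 0 t :=
    hasDerivAt_zero_of_anticomm
      (F := fun t u => fbar u - fbar t - (1 / 2) * stdOmega n (f t) (f u))
      (fun t u => by rw [stdOmega_anticomm]; ring) ho
  exact is_const_of_deriv_eq_zero (fun x => (ha x).differentiableAt) (fun x => (ha x).deriv) t s
end
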